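/- Let P be a Poisson bivector on ℝⁿ and X a smooth vector field with L_X(P) = 0. Assume there exists a smooth vector field τ on ℝⁿ such that L_τ(P) ≠ 0, L_X(L_τ(P)) = 0, and [L_τ²(P), P] = 0. Then P̃ := L_τ(P) is a Poisson bivector compatible with P, and X is locally bi-Hamiltonian with respect to the pair P, P̃, i.e. L_X(P) = 0 and L_X(P̃) = 0 with P, P̃ compatible Poisson bivectors. -/

import Mathlib

open Matrix BigOperators

noncomputable section

/-- Partial derivative of a scalar function on ℝⁿ in the `k`-th coordinate direction. -/
def pd {n : ℕ} (k : Fin n) (f : (Fin n → ℝ) → ℝ) (x : Fin n → ℝ) : ℝ :=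
  fderiv ℝ f x (Pi.single k 1)

/-- A (smooth) bivector on ℝⁿ: a smooth field of antisymmetric matrices. -/
def IsBivector {n : ℕ} (P : (Fin n → ℝ) → Matrix (Fin n) (Fin n) ℝ) : Prop :=
  (∀ i j, ContDiff ℝ (⊤ : ℕ∞) fun x => P x i j) ∧ ∀ x, (P x)ᵀ = -P x

/-- A smooth vector field on ℝⁿ. -/
def IsVectorField {n : ℕ} (τ : (Fin n → ℝ) → (Fin n → ℝ)) : Prop :=
  ∀ i, ContDiff ℝ (⊤ : ℕ∞) fun x => τ x i

/-- Components of the Schouten bracket of two bivectors: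
`[H,K]^{ijk} = -∑ₘ (K^{mk} ∂ₘH^{ij} + H^{mk} ∂ₘK^{ij} + cyclic permutations of (i,j,k))`. -/
def schouten {n : ℕ} (H K : (Fin n → ℝ) → Matrix (Fin n) (Fin n) ℝ)
    (x : Fin n → ℝ) (i j k : Fin n) : ℝ :=
  -∑ m, (K x m k * pd m (fun y => H y i j) x + H x m k * pd m (fun y => K y i j) x
       + K x m i * pd m (fun y => H y j k) x + H x m i * pd m (fun y => K y j k) x
       + K x m j * pd m (fun y => H y k i) x + H x m j * pd m (fun y => K y k i) x)

/-- Lie derivative of a bivector along a vector field: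
`(L_τ P)^{ij} = ∑ₖ (τ^k ∂ₖP^{ij} - P^{kj} ∂ₖτ^i - P^{ik} ∂ₖτ^j)`. -/
def lieD {n : ℕ} (τ : (Fin n → ℝ) → (Fin n → ℝ))
    (P : (Fin n → ℝ) → Matrix (Fin n) (Fin n) ℝ)
    (x : Fin n → ℝ) : Matrix (Fin n) (Fin n) ℝ :=
  Matrix.of fun i j => ∑ k, (τ x k * pd k (fun y => P y i j) x
    - P x k j * pd k (fun y => τ y i) x - P x i k * pd k (fun y => τ y j) x)

/-- A Poisson bivector: a bivector whose Schouten bracket with itself vanishes. -/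
def IsPoisson {n : ℕ} (P : (Fin n → ℝ) → Matrix (Fin n) (Fin n) ℝ) : Prop :=
  IsBivector P ∧ ∀ x i j k, schouten P P x i j k = 0

/-- Two bivectors are compatible if their Schouten bracket vanishes. -/
def Compatible {n : ℕ} (P Q : (Fin n → ℝ) → Matrix (Fin n) (Fin n) ℝ) : Prop :=
  ∀ x i j k, schouten P Q x i j k = 0

variable {n : ℕ}

lemma pd_neg (c : Fin n) (f : (Fin n → ℝ) → ℝ) (x : Fin n → ℝ) :
    pd c (fun y => -f y) x = -pd c f x := by
  simp [pd, fderiv_neg]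

lemma pd_const (c : Fin n) (x : Fin n → ℝ) (r : ℝ) : pd c (fun _ => r) x = 0 := by
  simp [pd]

lemma pd_add {f g : (Fin n → ℝ) → ℝ} {x : Fin n → ℝ} (hf : DifferentiableAt ℝ f x)
    (hg : DifferentiableAt ℝ g x) (c : Fin n) :
    pd c (fun y => f y + g y) x = pd c f x + pd c g x := by
  simp [pd, fderiv_fun_add hf hg]

lemma pd_sub {f g : (Fin n → ℝ) → ℝ} {x : Fin n → ℝ} (hf : DifferentiableAt ℝ f x)
    (hg : DifferentiableAt ℝ g x) (c : Fin n) :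
    pd c (fun y => f y - g y) x = pd c f x - pd c g x := by
  simp [pd, fderiv_fun_sub hf hg]

lemma pd_mul {f g : (Fin n → ℝ) → ℝ} {x : Fin n → ℝ} (hf : DifferentiableAt ℝ f x)
    (hg : DifferentiableAt ℝ g x) (c : Fin n) :
    pd c (fun y => f y * g y) x = pd c f x * g x + f x * pd c g x := by
  simp [pd, fderiv_fun_mul hf hg, smul_eq_mul]
  ring

lemma pd_sum {f : Fin n → (Fin n → ℝ) → ℝ} {x : Fin n → ℝ}
    (h : ∀ b, DifferentiableAt ℝ (f b) x) (c : Fin n) :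
    pd c (fun y => ∑ b, f b y) x = ∑ b, pd c (f b) x := by
  simp [pd, fderiv_fun_sum (fun b _ => h b)]

lemma smooth_pd {f : (Fin n → ℝ) → ℝ} (hf : ContDiff ℝ (⊤ : ℕ∞) f) (c : Fin n) :
    ContDiff ℝ (⊤ : ℕ∞) (pd c f) := by
  have h1 : ContDiff ℝ (⊤ : ℕ∞) (fderiv ℝ f) := hf.fderiv_right (m := (⊤:ℕ∞)) (by exact_mod_cast le_top)
  exact h1.clm_apply contDiff_const

lemma pd_comm {f : (Fin n → ℝ) → ℝ} (hf : ContDiff ℝ (⊤ : ℕ∞) f) (c d : Fin n)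
    (x : Fin n → ℝ) :
    pd c (pd d f) x = pd d (pd c f) x := by
  have hdf : ContDiff ℝ (⊤ : ℕ∞) (fderiv ℝ f) := hf.fderiv_right (m := (⊤:ℕ∞)) (by exact_mod_cast le_top)
  have h1 : ∀ (e : Fin n) (v : Fin n → ℝ),
      pd e (fun y => fderiv ℝ f y v) x = fderiv ℝ (fderiv ℝ f) x (Pi.single e 1) v := by
    intro e v
    have := fderiv_clm_apply (c := fderiv ℝ f) (u := fun _ => v)
      (hdf.differentiable (by simp) x) (differentiableAt_const v)
    simp only [pd, this]
    simp
  have hsym := second_derivative_symmetric (f := f) (f' := fderiv ℝ f)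
    (f'' := fderiv ℝ (fderiv ℝ f) x)
    (fun y => (hf.differentiable (by simp) y).hasFDerivAt)
    ((hdf.differentiable (by simp) x).hasFDerivAt) (Pi.single c 1) (Pi.single d 1)
  show pd c (fun y => fderiv ℝ f y (Pi.single d 1)) x = pd d (fun y => fderiv ℝ f y (Pi.single c 1)) x
  rw [h1 c (Pi.single d 1), h1 d (Pi.single c 1)]
  exact hsym

lemma double_sum_symm (F : Fin n → Fin n → ℝ) (hF : ∀ a b, F a b + F b a = 0) :
    ∑ a : Fin n, ∑ b, F a b = 0 := by
  have h2 : (∑ a : Fin n, ∑ b, F b a) = ∑ a : Fin n, ∑ b, F a b := Finset.sum_comm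
  have h1 : (∑ a : Fin n, ∑ b, F a b) + (∑ a : Fin n, ∑ b, F b a) = 0 := by
    rw [← Finset.sum_add_distrib]
    simp only [← Finset.sum_add_distrib]
    simp [hF]
  linarith

variable {τ : (Fin n → ℝ) → (Fin n → ℝ)} {H K P : (Fin n → ℝ) → Matrix (Fin n) (Fin n) ℝ}

lemma Dof {f : (Fin n → ℝ) → ℝ} (hf : ContDiff ℝ (⊤ : ℕ∞) f) (x : Fin n → ℝ) :
    DifferentiableAt ℝ f x := hf.differentiable (by simp) x

lemma biv_anti (hH : IsBivector H) (x : Fin n → ℝ) (α β : Fin n) :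
    H x β α = -(H x α β) := by
  have h := congrFun (congrFun (hH.2 x) α) β
  simpa using h

lemma pd_biv_anti (hH : IsBivector H) (c : Fin n) (x : Fin n → ℝ) (α β : Fin n) :
    pd c (fun y => H y β α) x = -(pd c (fun y => H y α β) x) := by
  have h1 : (fun y => H y β α) = fun y => -(H y α β) := funext fun y => biv_anti hH y α β
  rw [h1, pd_neg]

lemma pdpd_biv_anti (hH : IsBivector H) (c d : Fin n) (x : Fin n → ℝ) (α β : Fin n) :
    pd c (pd d (fun y => H y β α)) x = -(pd c (pd d (fun y => H y α β)) x) := by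
  have h2 : pd d (fun y => H y β α) = fun z => -(pd d (fun y => H y α β) z) := by
    funext z; exact pd_biv_anti hH d z α β
  rw [h2, pd_neg]

lemma lieD_apply (τ : (Fin n → ℝ) → (Fin n → ℝ)) (P : (Fin n → ℝ) → Matrix (Fin n) (Fin n) ℝ)
    (x : Fin n → ℝ) (i j : Fin n) :
    lieD τ P x i j = ∑ b, (τ x b * pd b (fun y => P y i j) x
      - P x b j * pd b (fun y => τ y i) x - P x i b * pd b (fun y => τ y j) x) := rfl

lemma lieD_smooth (hτ : IsVectorField τ) (hP : ∀ i j, ContDiff ℝ (⊤ : ℕ∞) fun x => P x i j)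
    (i j : Fin n) : ContDiff ℝ (⊤ : ℕ∞) (fun x => lieD τ P x i j) := by
  have e : (fun x => lieD τ P x i j) = fun x => ∑ b, (τ x b * pd b (fun y => P y i j) x
      - P x b j * pd b (fun y => τ y i) x - P x i b * pd b (fun y => τ y j) x) := rfl
  rw [e]
  apply ContDiff.sum
  intro b _
  exact (((hτ b).mul (smooth_pd (hP i j) b)).sub ((hP b j).mul (smooth_pd (hτ i) b))).sub
    ((hP i b).mul (smooth_pd (hτ j) b))

lemma lieD_isBivector (hτ : IsVectorField τ) (hP : IsBivector P) : IsBivector (lieD τ P) := by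
  refine ⟨fun i j => lieD_smooth hτ hP.1 i j, fun x => ?_⟩
  ext α β
  simp only [Matrix.transpose_apply, Matrix.neg_apply]
  rw [lieD_apply, lieD_apply, ← Finset.sum_neg_distrib]
  refine Finset.sum_congr rfl fun b _ => ?_
  rw [pd_biv_anti hP b x α β, biv_anti hP x b β, biv_anti hP x b α]
  ring

lemma schouten_symm (H K : (Fin n → ℝ) → Matrix (Fin n) (Fin n) ℝ) (x : Fin n → ℝ)
    (i j k : Fin n) : schouten H K x i j k = schouten K H x i j k := by
  simp only [schouten]
  congr 1
  exact Finset.sum_congr rfl fun m _ => by ring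

lemma pd_lieD (hτ : IsVectorField τ) (hP : ∀ i j, ContDiff ℝ (⊤ : ℕ∞) fun x => P x i j)
    (a i j : Fin n) (x : Fin n → ℝ) :
    pd a (fun y => lieD τ P y i j) x
      = ∑ b, (pd a (fun y => τ y b) x * pd b (fun y => P y i j) x
            + τ x b * pd a (pd b (fun y => P y i j)) x
            - (pd a (fun y => P y b j) x * pd b (fun y => τ y i) x
             + P x b j * pd a (pd b (fun y => τ y i)) x)
            - (pd a (fun y => P y i b) x * pd b (fun y => τ y j) x
             + P x i b * pd a (pd b (fun y => τ y j)) x)) := by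
  have e : (fun y => lieD τ P y i j)
      = fun y => ∑ b, (τ y b * pd b (fun z => P z i j) y - P y b j * pd b (fun z => τ z i) y
          - P y i b * pd b (fun z => τ z j) y) := rfl
  rw [e, pd_sum (fun b => (((Dof (hτ b) x).fun_mul (Dof (smooth_pd (hP i j) b) x)).fun_sub
      ((Dof (hP b j) x).fun_mul (Dof (smooth_pd (hτ i) b) x))).fun_sub
      ((Dof (hP i b) x).fun_mul (Dof (smooth_pd (hτ j) b) x))) a]
  refine Finset.sum_congr rfl fun b _ => ?_
  rw [pd_sub (((Dof (hτ b) x).fun_mul (Dof (smooth_pd (hP i j) b) x)).fun_sub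
      ((Dof (hP b j) x).fun_mul (Dof (smooth_pd (hτ i) b) x)))
      ((Dof (hP i b) x).fun_mul (Dof (smooth_pd (hτ j) b) x)) a,
    pd_sub ((Dof (hτ b) x).fun_mul (Dof (smooth_pd (hP i j) b) x))
      ((Dof (hP b j) x).fun_mul (Dof (smooth_pd (hτ i) b) x)) a,
    pd_mul (Dof (hτ b) x) (Dof (smooth_pd (hP i j) b) x) a,
    pd_mul (Dof (hP b j) x) (Dof (smooth_pd (hτ i) b) x) a,
    pd_mul (Dof (hP i b) x) (Dof (smooth_pd (hτ j) b) x) a]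

lemma pd_mul' {f g : (Fin n → ℝ) → ℝ} (hf : ContDiff ℝ (⊤ : ℕ∞) f)
    (hg : ContDiff ℝ (⊤ : ℕ∞) g) (a : Fin n) (x : Fin n → ℝ) :
    pd a (fun y => f y * g y) x = pd a f x * g x + f x * pd a g x :=
  pd_mul (Dof hf x) (Dof hg x) a

lemma pd_add6 {f1 f2 f3 f4 f5 f6 : (Fin n → ℝ) → ℝ} (h1 : ContDiff ℝ (⊤ : ℕ∞) f1)
    (h2 : ContDiff ℝ (⊤ : ℕ∞) f2) (h3 : ContDiff ℝ (⊤ : ℕ∞) f3) (h4 : ContDiff ℝ (⊤ : ℕ∞) f4)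
    (h5 : ContDiff ℝ (⊤ : ℕ∞) f5) (h6 : ContDiff ℝ (⊤ : ℕ∞) f6) (a : Fin n) (x : Fin n → ℝ) :
    pd a (fun y => f1 y + f2 y + f3 y + f4 y + f5 y + f6 y) x
      = pd a f1 x + pd a f2 x + pd a f3 x + pd a f4 x + pd a f5 x + pd a f6 x := by
  have D1 := Dof h1 x; have D2 := Dof h2 x; have D3 := Dof h3 x
  have D4 := Dof h4 x; have D5 := Dof h5 x; have D6 := Dof h6 x
  rw [pd_add ((((D1.fun_add D2).fun_add D3).fun_add D4).fun_add D5) D6 a,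
      pd_add (((D1.fun_add D2).fun_add D3).fun_add D4) D5 a,
      pd_add ((D1.fun_add D2).fun_add D3) D4 a,
      pd_add (D1.fun_add D2) D3 a,
      pd_add D1 D2 a]

lemma pd_schouten (hH : ∀ i j, ContDiff ℝ (⊤ : ℕ∞) fun x => H x i j)
    (hK : ∀ i j, ContDiff ℝ (⊤ : ℕ∞) fun x => K x i j)
    (a i j k : Fin n) (x : Fin n → ℝ) :
    pd a (fun y => schouten H K y i j k) x = -∑ b,
      ( pd a (fun y => K y b k) x * pd b (fun y => H y i j) x
      + K x b k * pd a (pd b (fun y => H y i j)) x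
      + (pd a (fun y => H y b k) x * pd b (fun y => K y i j) x
      + H x b k * pd a (pd b (fun y => K y i j)) x)
      + (pd a (fun y => K y b i) x * pd b (fun y => H y j k) x
      + K x b i * pd a (pd b (fun y => H y j k)) x)
      + (pd a (fun y => H y b i) x * pd b (fun y => K y j k) x
      + H x b i * pd a (pd b (fun y => K y j k)) x)
      + (pd a (fun y => K y b j) x * pd b (fun y => H y k i) x
      + K x b j * pd a (pd b (fun y => H y k i)) x)
      + (pd a (fun y => H y b j) x * pd b (fun y => K y k i) x
      + H x b j * pd a (pd b (fun y => K y k i)) x)) := by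
  have e : (fun y => schouten H K y i j k)
      = fun y => -∑ b, (K y b k * pd b (fun z => H z i j) y + H y b k * pd b (fun z => K z i j) y
       + K y b i * pd b (fun z => H z j k) y + H y b i * pd b (fun z => K z j k) y
       + K y b j * pd b (fun z => H z k i) y + H y b j * pd b (fun z => K z k i) y) := rfl
  rw [e, pd_neg, neg_inj]
  have hd : ∀ b : Fin n, DifferentiableAt ℝ (fun y => K y b k * pd b (fun z => H z i j) y
      + H y b k * pd b (fun z => K z i j) y + K y b i * pd b (fun z => H z j k) y
      + H y b i * pd b (fun z => K z j k) y + K y b j * pd b (fun z => H z k i) y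
      + H y b j * pd b (fun z => K z k i) y) x := fun b =>
    Dof ((((((((hK b k).mul (smooth_pd (hH i j) b)).add
      ((hH b k).mul (smooth_pd (hK i j) b))).add
      ((hK b i).mul (smooth_pd (hH j k) b))).add
      ((hH b i).mul (smooth_pd (hK j k) b))).add
      ((hK b j).mul (smooth_pd (hH k i) b))).add
      ((hH b j).mul (smooth_pd (hK k i) b)))) x
  rw [pd_sum hd a]
  refine Finset.sum_congr rfl fun b _ => ?_
  rw [pd_add6 ((hK b k).mul (smooth_pd (hH i j) b)) ((hH b k).mul (smooth_pd (hK i j) b))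
      ((hK b i).mul (smooth_pd (hH j k) b)) ((hH b i).mul (smooth_pd (hK j k) b))
      ((hK b j).mul (smooth_pd (hH k i) b)) ((hH b j).mul (smooth_pd (hK k i) b)) a,
    pd_mul' (hK b k) (smooth_pd (hH i j) b) a, pd_mul' (hH b k) (smooth_pd (hK i j) b) a,
    pd_mul' (hK b i) (smooth_pd (hH j k) b) a, pd_mul' (hH b i) (smooth_pd (hK j k) b) a,
    pd_mul' (hK b j) (smooth_pd (hH k i) b) a, pd_mul' (hH b j) (smooth_pd (hK k i) b) a]

lemma key_leibniz (hτ : IsVectorField τ) (hHb : IsBivector H) (hKb : IsBivector K)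
    (x : Fin n → ℝ) (i j k : Fin n) :
    schouten (lieD τ H) K x i j k + schouten H (lieD τ K) x i j k
      = (∑ m, τ x m * pd m (fun y => schouten H K y i j k) x)
        - ∑ m, (schouten H K x m j k * pd m (fun y => τ y i) x
              + schouten H K x i m k * pd m (fun y => τ y j) x
              + schouten H K x i j m * pd m (fun y => τ y k) x) := by
  have hA : schouten (lieD τ H) K x i j k = ∑ a, ∑ b, (0 - (K x a k * pd a (fun y => τ y b) x * pd b (fun y => H y i j) x) - (K x a k * τ x b * pd a (pd b (fun y => H y i j)) x) + K x a k * pd a (fun y => H y b j) x * pd b (fun y => τ y i) x + K x a k * H x b j * pd a (pd b (fun y => τ y i)) x + K x a k * pd a (fun y => H y i b) x * pd b (fun y => τ y j) x + K x a k * H x i b * pd a (pd b (fun y => τ y j)) x - (τ x b * pd b (fun y => H y a k) x * pd a (fun y => K y i j) x) + H x b k * pd b (fun y => τ y a) x * pd a (fun y => K y i j) x + H x a b * pd b (fun y => τ y k) x * pd a (fun y => K y i j) x - (K x a i * pd a (fun y => τ y b) x * pd b (fun y => H y j k) x) - (K x a i * τ x b * pd a (pd b (fun y => H y j k)) x) +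 K x a i * pd a (fun y => H y b k) x * pd b (fun y => τ y j) x + K x a i * H x b k * pd a (pd b (fun y => τ y j)) x + K x a i * pd a (fun y => H y j b) x * pd b (fun y => τ y k) x + K x a i * H x j b * pd a (pd b (fun y => τ y k)) x - (τ x b * pd b (fun y => H y a i) x * pd a (fun y => K y j k) x) + H x b i * pd b (fun y => τ y a) x * pd a (fun y => K y j k) x + H x a b * pd b (fun y => τ y i) x * pd a (fun y => K y j k) x - (K x a j * pd a (fun y => τ y b) x * pd b (fun y => H y k i) x) - (K x a j * τ x b * pd a (pd b (fun y => H y k i)) x) + K x a j * pd a (fun y => H y b i) x * pd b (fun y => τ y k) x + K x a j * H x b i * pd a (pd b (fun y => τ y k)) x + K x a j * pd a (fun y => H y k b) x * pd b (fun y => τ y i) x + K x a j * H x k b * pd a (pd b (fun y => τ y i)) x - (τ x b * pd b (fun y => H y a j) x * pd a (fun y => K y k i) x) + H x b j * pd b (fun y => τ y a) x * pd a (fun y => K y k i) x + H x a b * pd b (fun y => τ y j) x * pd a (fun y => K y k i) x) := by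
    simp only [schouten]
    rw [← Finset.sum_neg_distrib]
    refine Finset.sum_congr rfl fun a _ => ?_
    rw [lieD_apply τ H x a k, lieD_apply τ H x a i, lieD_apply τ H x a j,
        pd_lieD hτ hHb.1 a i j x, pd_lieD hτ hHb.1 a j k x, pd_lieD hτ hHb.1 a k i x]
    simp only [Finset.mul_sum, Finset.sum_mul]
    simp only [← Finset.sum_add_distrib]
    rw [← Finset.sum_neg_distrib]
    refine Finset.sum_congr rfl fun b _ => ?_
    ring
  have hB : schouten H (lieD τ K) x i j k = ∑ a, ∑ b, (0 - (τ x b * pd b (fun y => K y a k) x * pd a (fun y => H y i j) x) + K x b k * pd b (fun y => τ y a) x * pd a (fun y => H y i j) x + K x a b * pd b (fun y => τ y k) x * pd a (fun y => H y i j) x - (H x a k * pd a (fun y => τ y b) x * pd b (fun y => K y i j) x) - (H x a k * τ x b * pd a (pd b (fun y => K y i j)) x) + H x a k * pd a (fun y => K y b j) x * pd b (fun y => τ y i) x + H x a k * K x b j * pd a (pd b (fun y => τ y i)) x + H x a k * pd a (fun y => K y i b) x * pd b (fun y => τ y j) x + H x a k * K x i b * pd a (pd b (fun y => τ y j)) x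 - (τ x b * pd b (fun y => K y a i) x * pd a (fun y => H y j k) x) + K x b i * pd b (fun y => τ y a) x * pd a (fun y => H y j k) x + K x a b * pd b (fun y => τ y i) x * pd a (fun y => H y j k) x - (H x a i * pd a (fun y => τ y b) x * pd b (fun y => K y j k) x) - (H x a i * τ x b * pd a (pd b (fun y => K y j k)) x) + H x a i * pd a (fun y => K y b k) x * pd b (fun y => τ y j) x + H x a i * K x b k * pd a (pd b (fun y => τ y j)) x + H x a i * pd a (fun y => K y j b) x * pd b (fun y => τ y k) x + H x a i * K x j b * pd a (pd b (fun y => τ y k)) x - (τ x b * pd b (fun y => K y a j) x * pd a (fun y => H y k i) x) + K x b j * pd b (fun y => τ y a) x * pd a (fun y => H y k i) x + K x a b * pd b (fun y => τ y j) x * pd a (fun y => H y k i) x - (H x a j * pd a (fun y => τ y b) x * pd b (fun y => K y k i) x) - (H x a j * τ x b * pd a (pd b (fun y => K y k i)) x) + H x a j * pd a (fun y => K y b i) x * pd b (fun y => τ y k) x + H x a j * K x b i * pd a (pd b (fun y => τ y k)) x + H x a j * pd a (fun y => K y k b) x * pd b (fun y => τ y i) x + H x a j * K x k b * pd a (pd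 b (fun y => τ y i)) x) := by
    simp only [schouten]
    rw [← Finset.sum_neg_distrib]
    refine Finset.sum_congr rfl fun a _ => ?_
    rw [lieD_apply τ K x a k, lieD_apply τ K x a i, lieD_apply τ K x a j,
        pd_lieD hτ hKb.1 a i j x, pd_lieD hτ hKb.1 a j k x, pd_lieD hτ hKb.1 a k i x]
    simp only [Finset.mul_sum, Finset.sum_mul]
    simp only [← Finset.sum_add_distrib]
    rw [← Finset.sum_neg_distrib]
    refine Finset.sum_congr rfl fun b _ => ?_
    ring
  have hC : (∑ m, τ x m * pd m (fun y => schouten H K y i j k) x)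
      = ∑ a, ∑ b, (0 - (τ x a * pd a (fun y => K y b k) x * pd b (fun y => H y i j) x) - (τ x a * K x b k * pd a (pd b (fun y => H y i j)) x) - (τ x a * pd a (fun y => H y b k) x * pd b (fun y => K y i j) x) - (τ x a * H x b k * pd a (pd b (fun y => K y i j)) x) - (τ x a * pd a (fun y => K y b i) x * pd b (fun y => H y j k) x) - (τ x a * K x b i * pd a (pd b (fun y => H y j k)) x) - (τ x a * pd a (fun y => H y b i) x * pd b (fun y => K y j k) x) - (τ x a * H x b i * pd a (pd b (fun y => K y j k)) x) - (τ x a * pd a (fun y => K y b j) x * pd b (fun y => H y k i) x) - (τ x a * K x b j * pd a (pd b (fun y => H y k i)) x) - (τ x a * pd a (fun y => H y b j) x * pd b (fun y => K y k i) x) - (τ x a * H x b j * pd a (pd b (fun y => K y k i)) x)) := by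
    refine Finset.sum_congr rfl fun a _ => ?_
    rw [pd_schouten hHb.1 hKb.1 a i j k x, mul_neg, Finset.mul_sum, ← Finset.sum_neg_distrib]
    refine Finset.sum_congr rfl fun b _ => ?_
    ring
  have hD : (∑ m, (schouten H K x m j k * pd m (fun y => τ y i) x
              + schouten H K x i m k * pd m (fun y => τ y j) x
              + schouten H K x i j m * pd m (fun y => τ y k) x))
      = ∑ a, ∑ b, (0 - (K x b k * pd b (fun y => H y a j) x * pd a (fun y => τ y i) x) - (H x b k * pd b (fun y => K y a j) x * pd a (fun y => τ y i) x) - (K x b a * pd b (fun y => H y j k) x * pd a (fun y => τ y i) x) - (H x b a * pd b (fun y => K y j k) x * pd a (fun y => τ y i) x) - (K x b j * pd b (fun y => H y k a) x * pd a (fun y => τ y i) x) - (H x b j * pd b (fun y => K y k a) x * pd a (fun y => τ y i) x) - (K x b k * pd b (fun y => H y i a) x * pd a (fun y => τ y j) x) - (H x b k * pd b (fun y => K y i a) x * pd a (fun y => τ y j) x) - (K x b i * pd b (fun y => H y a k) x * pd a (fun y => τ y j) x) - (H x b i * pd b (fun y => K y a k) x * pd a (fun y => τ y j) x) - (K x b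 a * pd b (fun y => H y k i) x * pd a (fun y => τ y j) x) - (H x b a * pd b (fun y => K y k i) x * pd a (fun y => τ y j) x) - (K x b a * pd b (fun y => H y i j) x * pd a (fun y => τ y k) x) - (H x b a * pd b (fun y => K y i j) x * pd a (fun y => τ y k) x) - (K x b i * pd b (fun y => H y j a) x * pd a (fun y => τ y k) x) - (H x b i * pd b (fun y => K y j a) x * pd a (fun y => τ y k) x) - (K x b j * pd b (fun y => H y a i) x * pd a (fun y => τ y k) x) - (H x b j * pd b (fun y => K y a i) x * pd a (fun y => τ y k) x)) := by
    refine Finset.sum_congr rfl fun a _ => ?_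
    simp only [schouten]
    simp only [neg_mul, Finset.sum_mul, ← Finset.sum_neg_distrib]
    simp only [← Finset.sum_add_distrib]
    refine Finset.sum_congr rfl fun b _ => ?_
    ring
  have main : ∑ a : Fin n, ∑ b, ((0 - (K x a k * pd a (fun y => τ y b) x * pd b (fun y => H y i j) x) - (K x a k * τ x b * pd a (pd b (fun y => H y i j)) x) + K x a k * pd a (fun y => H y b j) x * pd b (fun y => τ y i) x + K x a k * H x b j * pd a (pd b (fun y => τ y i)) x + K x a k * pd a (fun y => H y i b) x * pd b (fun y => τ y j) x + K x a k * H x i b * pd a (pd b (fun y => τ y j)) x - (τ x b * pd b (fun y => H y a k) x * pd a (fun y => K y i j) x) + H x b k * pd b (fun y => τ y a) x * pd a (fun y => K y i j) x + H x a b * pd b (fun y => τ y k) x * pd a (fun y => K y i j) x - (K x a i * pd a (fun y => τ y b) x * pd b (fun y => H y j k) x) - (K x a i * τ x b * pd a (pd b (fun y => H y j k)) x) + K x a i * pd a (fun y => H y b k) x * pd b (fun y => τ y j) x + K x a i * H x b k * pd a (pd b (fun y => τ y j)) x + K x a i * pd a (fun y => H y j b) x * pd b (fun y => τ y k) x + K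 x a i * H x j b * pd a (pd b (fun y => τ y k)) x - (τ x b * pd b (fun y => H y a i) x * pd a (fun y => K y j k) x) + H x b i * pd b (fun y => τ y a) x * pd a (fun y => K y j k) x + H x a b * pd b (fun y => τ y i) x * pd a (fun y => K y j k) x - (K x a j * pd a (fun y => τ y b) x * pd b (fun y => H y k i) x) - (K x a j * τ x b * pd a (pd b (fun y => H y k i)) x) + K x a j * pd a (fun y => H y b i) x * pd b (fun y => τ y k) x + K x a j * H x b i * pd a (pd b (fun y => τ y k)) x + K x a j * pd a (fun y => H y k b) x * pd b (fun y => τ y i) x + K x a j * H x k b * pd a (pd b (fun y => τ y i)) x - (τ x b * pd b (fun y => H y a j) x * pd a (fun y => K y k i) x) + H x b j * pd b (fun y => τ y a) x * pd a (fun y => K y k i) x + H x a b * pd b (fun y => τ y j) x * pd a (fun y => K y k i) x) + (0 - (τ x b * pd b (fun y => K y a k) x * pd a (fun y => H y i j) x) + K x b k * pd b (fun y => τ y a) x * pd a (fun y => H y i j) x + K x a b * pd b (fun y => τ y k) x * pd a (fun y => H y i j) x - (H x a k * pd a (fun y => τ y b) x * pd b (fun y => K y i j) x) - (H x a k * τ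 x b * pd a (pd b (fun y => K y i j)) x) + H x a k * pd a (fun y => K y b j) x * pd b (fun y => τ y i) x + H x a k * K x b j * pd a (pd b (fun y => τ y i)) x + H x a k * pd a (fun y => K y i b) x * pd b (fun y => τ y j) x + H x a k * K x i b * pd a (pd b (fun y => τ y j)) x - (τ x b * pd b (fun y => K y a i) x * pd a (fun y => H y j k) x) + K x b i * pd b (fun y => τ y a) x * pd a (fun y => H y j k) x + K x a b * pd b (fun y => τ y i) x * pd a (fun y => H y j k) x - (H x a i * pd a (fun y => τ y b) x * pd b (fun y => K y j k) x) - (H x a i * τ x b * pd a (pd b (fun y => K y j k)) x) + H x a i * pd a (fun y => K y b k) x * pd b (fun y => τ y j) x + H x a i * K x b k * pd a (pd b (fun y => τ y j)) x + H x a i * pd a (fun y => K y j b) x * pd b (fun y => τ y k) x + H x a i * K x j b * pd a (pd b (fun y => τ y k)) x - (τ x b * pd b (fun y => K y a j) x * pd a (fun y => H y k i) x) + K x b j * pd b (fun y => τ y a) x * pd a (fun y => H y k i) x + K x a b * pd b (fun y => τ y j) x * pd a (fun y => H y k i) x - (H x a j * pd a (fun y => τ y b) x * pd b (fun y => K y k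 i) x) - (H x a j * τ x b * pd a (pd b (fun y => K y k i)) x) + H x a j * pd a (fun y => K y b i) x * pd b (fun y => τ y k) x + H x a j * K x b i * pd a (pd b (fun y => τ y k)) x + H x a j * pd a (fun y => K y k b) x * pd b (fun y => τ y i) x + H x a j * K x k b * pd a (pd b (fun y => τ y i)) x) - (0 - (τ x a * pd a (fun y => K y b k) x * pd b (fun y => H y i j) x) - (τ x a * K x b k * pd a (pd b (fun y => H y i j)) x) - (τ x a * pd a (fun y => H y b k) x * pd b (fun y => K y i j) x) - (τ x a * H x b k * pd a (pd b (fun y => K y i j)) x) - (τ x a * pd a (fun y => K y b i) x * pd b (fun y => H y j k) x) - (τ x a * K x b i * pd a (pd b (fun y => H y j k)) x) - (τ x a * pd a (fun y => H y b i) x * pd b (fun y => K y j k) x) - (τ x a * H x b i * pd a (pd b (fun y => K y j k)) x) - (τ x a * pd a (fun y => K y b j) x * pd b (fun y => H y k i) x) - (τ x a * K x b j * pd a (pd b (fun y => H y k i)) x) - (τ x a * pd a (fun y => H y b j) x * pd b (fun y => K y k i) x) - (τ x a * H x b j * pd a (pd b (fun y => K y k i)) x)) + (0 - (K x b k * pd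 b (fun y => H y a j) x * pd a (fun y => τ y i) x) - (H x b k * pd b (fun y => K y a j) x * pd a (fun y => τ y i) x) - (K x b a * pd b (fun y => H y j k) x * pd a (fun y => τ y i) x) - (H x b a * pd b (fun y => K y j k) x * pd a (fun y => τ y i) x) - (K x b j * pd b (fun y => H y k a) x * pd a (fun y => τ y i) x) - (H x b j * pd b (fun y => K y k a) x * pd a (fun y => τ y i) x) - (K x b k * pd b (fun y => H y i a) x * pd a (fun y => τ y j) x) - (H x b k * pd b (fun y => K y i a) x * pd a (fun y => τ y j) x) - (K x b i * pd b (fun y => H y a k) x * pd a (fun y => τ y j) x) - (H x b i * pd b (fun y => K y a k) x * pd a (fun y => τ y j) x) - (K x b a * pd b (fun y => H y k i) x * pd a (fun y => τ y j) x) - (H x b a * pd b (fun y => K y k i) x * pd a (fun y => τ y j) x) - (K x b a * pd b (fun y => H y i j) x * pd a (fun y => τ y k) x) - (H x b a * pd b (fun y => K y i j) x * pd a (fun y => τ y k) x) - (K x b i * pd b (fun y => H y j a) x * pd a (fun y => τ y k) x) - (H x b i * pd b (fun y => K y j a) x * pd a (fun y => τ y k) x) - (K x b j * pd b (fun y =>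 H y a i) x * pd a (fun y => τ y k) x) - (H x b j * pd b (fun y => K y a i) x * pd a (fun y => τ y k) x))) = 0 := by
    apply double_sum_symm
    intro a b
    have rel0 : pd a (fun y => H y b i) x = -(pd a (fun y => H y i b) x) := pd_biv_anti hHb a x i b
    have rel1 : pd a (fun y => H y b j) x = -(pd a (fun y => H y j b) x) := pd_biv_anti hHb a x j b
    have rel2 : pd a (fun y => H y b k) x = -(pd a (fun y => H y k b) x) := pd_biv_anti hHb a x k b
    have rel3 : pd a (fun y => H y k i) x = -(pd a (fun y => H y i k) x) := pd_biv_anti hHb a x i k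
    have rel4 : pd b (fun y => H y a i) x = -(pd b (fun y => H y i a) x) := pd_biv_anti hHb b x i a
    have rel5 : pd b (fun y => H y a j) x = -(pd b (fun y => H y j a) x) := pd_biv_anti hHb b x j a
    have rel6 : pd b (fun y => H y a k) x = -(pd b (fun y => H y k a) x) := pd_biv_anti hHb b x k a
    have rel7 : pd b (fun y => H y k i) x = -(pd b (fun y => H y i k) x) := pd_biv_anti hHb b x i k
    have rel8 : pd a (fun y => K y b i) x = -(pd a (fun y => K y i b) x) := pd_biv_anti hKb a x i b
    have rel9 : pd a (fun y => K y b j) x = -(pd a (fun y => K y j b) x) := pd_biv_anti hKb a x j b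
    have rel10 : pd a (fun y => K y b k) x = -(pd a (fun y => K y k b) x) := pd_biv_anti hKb a x k b
    have rel11 : pd a (fun y => K y k i) x = -(pd a (fun y => K y i k) x) := pd_biv_anti hKb a x i k
    have rel12 : pd b (fun y => K y a i) x = -(pd b (fun y => K y i a) x) := pd_biv_anti hKb b x i a
    have rel13 : pd b (fun y => K y a j) x = -(pd b (fun y => K y j a) x) := pd_biv_anti hKb b x j a
    have rel14 : pd b (fun y => K y a k) x = -(pd b (fun y => K y k a) x) := pd_biv_anti hKb b x k a
    have rel15 : pd b (fun y => K y k i) x = -(pd b (fun y => K y i k) x) := pd_biv_anti hKb b x i k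
    have rel16 : pd a (pd b (fun y => H y k i)) x = -(pd a (pd b (fun y => H y i k)) x) := pdpd_biv_anti hHb a b x i k
    have rel17 : pd b (pd a (fun y => H y i j)) x = pd a (pd b (fun y => H y i j)) x := pd_comm (hHb.1 i j) b a x
    have rel18 : pd b (pd a (fun y => H y j k)) x = pd a (pd b (fun y => H y j k)) x := pd_comm (hHb.1 j k) b a x
    have rel19 : pd b (pd a (fun y => H y k i)) x = -(pd a (pd b (fun y => H y i k)) x) := by rw [pdpd_biv_anti hHb b a x i k, pd_comm (hHb.1 i k) b a x]
    have rel20 : pd a (pd b (fun y => K y k i)) x = -(pd a (pd b (fun y => K y i k)) x) := pdpd_biv_anti hKb a b x i k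
    have rel21 : pd b (pd a (fun y => K y i j)) x = pd a (pd b (fun y => K y i j)) x := pd_comm (hKb.1 i j) b a x
    have rel22 : pd b (pd a (fun y => K y j k)) x = pd a (pd b (fun y => K y j k)) x := pd_comm (hKb.1 j k) b a x
    have rel23 : pd b (pd a (fun y => K y k i)) x = -(pd a (pd b (fun y => K y i k)) x) := by rw [pdpd_biv_anti hKb b a x i k, pd_comm (hKb.1 i k) b a x]
    have rel24 : pd b (pd a (fun y => τ y i)) x = pd a (pd b (fun y => τ y i)) x := pd_comm (hτ i) b a x
    have rel25 : pd b (pd a (fun y => τ y j)) x = pd a (pd b (fun y => τ y j)) x := pd_comm (hτ j) b a x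
    have rel26 : pd b (pd a (fun y => τ y k)) x = pd a (pd b (fun y => τ y k)) x := pd_comm (hτ k) b a x
    have rel27 : H x a i = -(H x i a) := biv_anti hHb x i a
    have rel28 : H x a j = -(H x j a) := biv_anti hHb x j a
    have rel29 : H x a k = -(H x k a) := biv_anti hHb x k a
    have rel30 : H x b a = -(H x a b) := biv_anti hHb x a b
    have rel31 : H x b i = -(H x i b) := biv_anti hHb x i b
    have rel32 : H x b j = -(H x j b) := biv_anti hHb x j b
    have rel33 : H x b k = -(H x k b) := biv_anti hHb x k b
    have rel34 : K x a i = -(K x i a) := biv_anti hKb x i a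
    have rel35 : K x a j = -(K x j a) := biv_anti hKb x j a
    have rel36 : K x a k = -(K x k a) := biv_anti hKb x k a
    have rel37 : K x b a = -(K x a b) := biv_anti hKb x a b
    have rel38 : K x b i = -(K x i b) := biv_anti hKb x i b
    have rel39 : K x b j = -(K x j b) := biv_anti hKb x j b
    have rel40 : K x b k = -(K x k b) := biv_anti hKb x k b
    simp only [rel0, rel1, rel2, rel3, rel4, rel5, rel6, rel7, rel8, rel9, rel10, rel11, rel12, rel13, rel14, rel15, rel16, rel17, rel18, rel19, rel20, rel21, rel22, rel23, rel24, rel25, rel26, rel27, rel28, rel29, rel30, rel31, rel32, rel33, rel34, rel35, rel36, rel37, rel38, rel39, rel40]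
    ring
  have expand : ∑ a : Fin n, ∑ b, ((0 - (K x a k * pd a (fun y => τ y b) x * pd b (fun y => H y i j) x) - (K x a k * τ x b * pd a (pd b (fun y => H y i j)) x) + K x a k * pd a (fun y => H y b j) x * pd b (fun y => τ y i) x + K x a k * H x b j * pd a (pd b (fun y => τ y i)) x + K x a k * pd a (fun y => H y i b) x * pd b (fun y => τ y j) x + K x a k * H x i b * pd a (pd b (fun y => τ y j)) x - (τ x b * pd b (fun y => H y a k) x * pd a (fun y => K y i j) x) + H x b k * pd b (fun y => τ y a) x * pd a (fun y => K y i j) x + H x a b * pd b (fun y => τ y k) x * pd a (fun y => K y i j) x - (K x a i * pd a (fun y => τ y b) x * pd b (fun y => H y j k) x) - (K x a i * τ x b * pd a (pd b (fun y => H y j k)) x) + K x a i * pd a (fun y => H y b k) x * pd b (fun y => τ y j) x + K x a i * H x b k * pd a (pd b (fun y => τ y j)) x + K x a i * pd a (fun y => H y j b) x * pd b (fun y => τ y k) x + K x a i * H x j b * pd a (pd b (fun y => τ y k)) x - (τ x b * pd b (fun y => H y a i) x * pd a (fun y => K y j k) x) + H x b i * pd b (fun y => τ y a) x * pd a (fun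 y => K y j k) x + H x a b * pd b (fun y => τ y i) x * pd a (fun y => K y j k) x - (K x a j * pd a (fun y => τ y b) x * pd b (fun y => H y k i) x) - (K x a j * τ x b * pd a (pd b (fun y => H y k i)) x) + K x a j * pd a (fun y => H y b i) x * pd b (fun y => τ y k) x + K x a j * H x b i * pd a (pd b (fun y => τ y k)) x + K x a j * pd a (fun y => H y k b) x * pd b (fun y => τ y i) x + K x a j * H x k b * pd a (pd b (fun y => τ y i)) x - (τ x b * pd b (fun y => H y a j) x * pd a (fun y => K y k i) x) + H x b j * pd b (fun y => τ y a) x * pd a (fun y => K y k i) x + H x a b * pd b (fun y => τ y j) x * pd a (fun y => K y k i) x) + (0 - (τ x b * pd b (fun y => K y a k) x * pd a (fun y => H y i j) x) + K x b k * pd b (fun y => τ y a) x * pd a (fun y => H y i j) x + K x a b * pd b (fun y => τ y k) x * pd a (fun y => H y i j) x - (H x a k * pd a (fun y => τ y b) x * pd b (fun y => K y i j) x) - (H x a k * τ x b * pd a (pd b (fun y => K y i j)) x) + H x a k * pd a (fun y => K y b j) x * pd b (fun y => τ y i) x + H x a k * K x b j * pd a (pd b (fun y => τ y i)) x + H x a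 k * pd a (fun y => K y i b) x * pd b (fun y => τ y j) x + H x a k * K x i b * pd a (pd b (fun y => τ y j)) x - (τ x b * pd b (fun y => K y a i) x * pd a (fun y => H y j k) x) + K x b i * pd b (fun y => τ y a) x * pd a (fun y => H y j k) x + K x a b * pd b (fun y => τ y i) x * pd a (fun y => H y j k) x - (H x a i * pd a (fun y => τ y b) x * pd b (fun y => K y j k) x) - (H x a i * τ x b * pd a (pd b (fun y => K y j k)) x) + H x a i * pd a (fun y => K y b k) x * pd b (fun y => τ y j) x + H x a i * K x b k * pd a (pd b (fun y => τ y j)) x + H x a i * pd a (fun y => K y j b) x * pd b (fun y => τ y k) x + H x a i * K x j b * pd a (pd b (fun y => τ y k)) x - (τ x b * pd b (fun y => K y a j) x * pd a (fun y => H y k i) x) + K x b j * pd b (fun y => τ y a) x * pd a (fun y => H y k i) x + K x a b * pd b (fun y => τ y j) x * pd a (fun y => H y k i) x - (H x a j * pd a (fun y => τ y b) x * pd b (fun y => K y k i) x) - (H x a j * τ x b * pd a (pd b (fun y => K y k i)) x) + H x a j * pd a (fun y => K y b i) x * pd b (fun y => τ y k) x + H x a j * K x b i * pd a (pd b (fun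 y => τ y k)) x + H x a j * pd a (fun y => K y k b) x * pd b (fun y => τ y i) x + H x a j * K x k b * pd a (pd b (fun y => τ y i)) x) - (0 - (τ x a * pd a (fun y => K y b k) x * pd b (fun y => H y i j) x) - (τ x a * K x b k * pd a (pd b (fun y => H y i j)) x) - (τ x a * pd a (fun y => H y b k) x * pd b (fun y => K y i j) x) - (τ x a * H x b k * pd a (pd b (fun y => K y i j)) x) - (τ x a * pd a (fun y => K y b i) x * pd b (fun y => H y j k) x) - (τ x a * K x b i * pd a (pd b (fun y => H y j k)) x) - (τ x a * pd a (fun y => H y b i) x * pd b (fun y => K y j k) x) - (τ x a * H x b i * pd a (pd b (fun y => K y j k)) x) - (τ x a * pd a (fun y => K y b j) x * pd b (fun y => H y k i) x) - (τ x a * K x b j * pd a (pd b (fun y => H y k i)) x) - (τ x a * pd a (fun y => H y b j) x * pd b (fun y => K y k i) x) - (τ x a * H x b j * pd a (pd b (fun y => K y k i)) x)) + (0 - (K x b k * pd b (fun y => H y a j) x * pd a (fun y => τ y i) x) - (H x b k * pd b (fun y => K y a j) x * pd a (fun y => τ y i) x) - (K x b a * pd b (fun y => H y j k) x * pd a (fun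 y => τ y i) x) - (H x b a * pd b (fun y => K y j k) x * pd a (fun y => τ y i) x) - (K x b j * pd b (fun y => H y k a) x * pd a (fun y => τ y i) x) - (H x b j * pd b (fun y => K y k a) x * pd a (fun y => τ y i) x) - (K x b k * pd b (fun y => H y i a) x * pd a (fun y => τ y j) x) - (H x b k * pd b (fun y => K y i a) x * pd a (fun y => τ y j) x) - (K x b i * pd b (fun y => H y a k) x * pd a (fun y => τ y j) x) - (H x b i * pd b (fun y => K y a k) x * pd a (fun y => τ y j) x) - (K x b a * pd b (fun y => H y k i) x * pd a (fun y => τ y j) x) - (H x b a * pd b (fun y => K y k i) x * pd a (fun y => τ y j) x) - (K x b a * pd b (fun y => H y i j) x * pd a (fun y => τ y k) x) - (H x b a * pd b (fun y => K y i j) x * pd a (fun y => τ y k) x) - (K x b i * pd b (fun y => H y j a) x * pd a (fun y => τ y k) x) - (H x b i * pd b (fun y => K y j a) x * pd a (fun y => τ y k) x) - (K x b j * pd b (fun y => H y a i) x * pd a (fun y => τ y k) x) - (H x b j * pd b (fun y => K y a i) x * pd a (fun y => τ y k) x)))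
      = (∑ a : Fin n, ∑ b, (0 - (K x a k * pd a (fun y => τ y b) x * pd b (fun y => H y i j) x) - (K x a k * τ x b * pd a (pd b (fun y => H y i j)) x) + K x a k * pd a (fun y => H y b j) x * pd b (fun y => τ y i) x + K x a k * H x b j * pd a (pd b (fun y => τ y i)) x + K x a k * pd a (fun y => H y i b) x * pd b (fun y => τ y j) x + K x a k * H x i b * pd a (pd b (fun y => τ y j)) x - (τ x b * pd b (fun y => H y a k) x * pd a (fun y => K y i j) x) + H x b k * pd b (fun y => τ y a) x * pd a (fun y => K y i j) x + H x a b * pd b (fun y => τ y k) x * pd a (fun y => K y i j) x - (K x a i * pd a (fun y => τ y b) x * pd b (fun y => H y j k) x) - (K x a i * τ x b * pd a (pd b (fun y => H y j k)) x) + K x a i * pd a (fun y => H y b k) x * pd b (fun y => τ y j) x + K x a i * H x b k * pd a (pd b (fun y => τ y j)) x + K x a i * pd a (fun y => H y j b) x * pd b (fun y => τ y k) x + K x a i * H x j b * pd a (pd b (fun y => τ y k)) x - (τ x b * pd b (fun y => H y a i) x * pd a (fun y => K y j k) x) + H x b i * pd b (fun y => τ y a) x * pd a (fun y => K y j k) x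 + H x a b * pd b (fun y => τ y i) x * pd a (fun y => K y j k) x - (K x a j * pd a (fun y => τ y b) x * pd b (fun y => H y k i) x) - (K x a j * τ x b * pd a (pd b (fun y => H y k i)) x) + K x a j * pd a (fun y => H y b i) x * pd b (fun y => τ y k) x + K x a j * H x b i * pd a (pd b (fun y => τ y k)) x + K x a j * pd a (fun y => H y k b) x * pd b (fun y => τ y i) x + K x a j * H x k b * pd a (pd b (fun y => τ y i)) x - (τ x b * pd b (fun y => H y a j) x * pd a (fun y => K y k i) x) + H x b j * pd b (fun y => τ y a) x * pd a (fun y => K y k i) x + H x a b * pd b (fun y => τ y j) x * pd a (fun y => K y k i) x)) + (∑ a : Fin n, ∑ b, (0 - (τ x b * pd b (fun y => K y a k) x * pd a (fun y => H y i j) x) + K x b k * pd b (fun y => τ y a) x * pd a (fun y => H y i j) x + K x a b * pd b (fun y => τ y k) x * pd a (fun y => H y i j) x - (H x a k * pd a (fun y => τ y b) x * pd b (fun y => K y i j) x) - (H x a k * τ x b * pd a (pd b (fun y => K y i j)) x) + H x a k * pd a (fun y => K y b j) x * pd b (fun y => τ y i) x + H x a k * K x b j * pd a (pd b (fun y =>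 τ y i)) x + H x a k * pd a (fun y => K y i b) x * pd b (fun y => τ y j) x + H x a k * K x i b * pd a (pd b (fun y => τ y j)) x - (τ x b * pd b (fun y => K y a i) x * pd a (fun y => H y j k) x) + K x b i * pd b (fun y => τ y a) x * pd a (fun y => H y j k) x + K x a b * pd b (fun y => τ y i) x * pd a (fun y => H y j k) x - (H x a i * pd a (fun y => τ y b) x * pd b (fun y => K y j k) x) - (H x a i * τ x b * pd a (pd b (fun y => K y j k)) x) + H x a i * pd a (fun y => K y b k) x * pd b (fun y => τ y j) x + H x a i * K x b k * pd a (pd b (fun y => τ y j)) x + H x a i * pd a (fun y => K y j b) x * pd b (fun y => τ y k) x + H x a i * K x j b * pd a (pd b (fun y => τ y k)) x - (τ x b * pd b (fun y => K y a j) x * pd a (fun y => H y k i) x) + K x b j * pd b (fun y => τ y a) x * pd a (fun y => H y k i) x + K x a b * pd b (fun y => τ y j) x * pd a (fun y => H y k i) x - (H x a j * pd a (fun y => τ y b) x * pd b (fun y => K y k i) x) - (H x a j * τ x b * pd a (pd b (fun y => K y k i)) x) + H x a j * pd a (fun y => K y b i) x * pd b (fun y => τ y k) x + H x a j * K x b i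 * pd a (pd b (fun y => τ y k)) x + H x a j * pd a (fun y => K y k b) x * pd b (fun y => τ y i) x + H x a j * K x k b * pd a (pd b (fun y => τ y i)) x))
        - (∑ a : Fin n, ∑ b, (0 - (τ x a * pd a (fun y => K y b k) x * pd b (fun y => H y i j) x) - (τ x a * K x b k * pd a (pd b (fun y => H y i j)) x) - (τ x a * pd a (fun y => H y b k) x * pd b (fun y => K y i j) x) - (τ x a * H x b k * pd a (pd b (fun y => K y i j)) x) - (τ x a * pd a (fun y => K y b i) x * pd b (fun y => H y j k) x) - (τ x a * K x b i * pd a (pd b (fun y => H y j k)) x) - (τ x a * pd a (fun y => H y b i) x * pd b (fun y => K y j k) x) - (τ x a * H x b i * pd a (pd b (fun y => K y j k)) x) - (τ x a * pd a (fun y => K y b j) x * pd b (fun y => H y k i) x) - (τ x a * K x b j * pd a (pd b (fun y => H y k i)) x) - (τ x a * pd a (fun y => H y b j) x * pd b (fun y => K y k i) x) - (τ x a * H x b j * pd a (pd b (fun y => K y k i)) x))) + (∑ a : Fin n, ∑ b, (0 - (K x b k * pd b (fun y => H y a j) x * pd a (fun y => τ y i) x) - (H x b k * pd b (fun y => K y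 a j) x * pd a (fun y => τ y i) x) - (K x b a * pd b (fun y => H y j k) x * pd a (fun y => τ y i) x) - (H x b a * pd b (fun y => K y j k) x * pd a (fun y => τ y i) x) - (K x b j * pd b (fun y => H y k a) x * pd a (fun y => τ y i) x) - (H x b j * pd b (fun y => K y k a) x * pd a (fun y => τ y i) x) - (K x b k * pd b (fun y => H y i a) x * pd a (fun y => τ y j) x) - (H x b k * pd b (fun y => K y i a) x * pd a (fun y => τ y j) x) - (K x b i * pd b (fun y => H y a k) x * pd a (fun y => τ y j) x) - (H x b i * pd b (fun y => K y a k) x * pd a (fun y => τ y j) x) - (K x b a * pd b (fun y => H y k i) x * pd a (fun y => τ y j) x) - (H x b a * pd b (fun y => K y k i) x * pd a (fun y => τ y j) x) - (K x b a * pd b (fun y => H y i j) x * pd a (fun y => τ y k) x) - (H x b a * pd b (fun y => K y i j) x * pd a (fun y => τ y k) x) - (K x b i * pd b (fun y => H y j a) x * pd a (fun y => τ y k) x) - (H x b i * pd b (fun y => K y j a) x * pd a (fun y => τ y k) x) - (K x b j * pd b (fun y => H y a i) x * pd a (fun y => τ y k) x) - (H x b j * pd b (fun y => K y a i) x * pd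 a (fun y => τ y k) x))) := by
    simp only [Finset.sum_add_distrib, Finset.sum_sub_distrib]
  rw [hA, hB, hC, hD]
  linarith [main, expand]

/-- if `L_X(P) = 0`, `L_τ(P) ≠ 0`, `L_X(L_τ(P)) = 0` and `[L_τ²(P), P] = 0`,
then `P̃ = L_τ(P)` is a Poisson bivector compatible with `P`, and `X` is locally
bi-Hamiltonian with respect to the pair `P, P̃`. -/
theorem locally_biHamiltonian_of_lie_deriv {n : ℕ} (hn : 1 ≤ n)
    (P : (Fin n → ℝ) → Matrix (Fin n) (Fin n) ℝ) (hP : IsPoisson P)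
    (X : (Fin n → ℝ) → (Fin n → ℝ)) (hX : IsVectorField X)
    (hXP : ∀ x, lieD X P x = 0)
    (τ : (Fin n → ℝ) → (Fin n → ℝ)) (hτ : IsVectorField τ)
    (hne : ¬ ∀ x, lieD τ P x = 0)
    (hXτ : ∀ x, lieD X (lieD τ P) x = 0)
    (hc : ∀ x i j k, schouten (lieD τ (lieD τ P)) P x i j k = 0) :
    IsPoisson (lieD τ P) ∧ Compatible (lieD τ P) P ∧
      (∀ x, lieD X P x = 0) ∧ (∀ x, lieD X (lieD τ P) x = 0) := by
  obtain ⟨hPb, hPP⟩ := hP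
  have hPt : IsBivector (lieD τ P) := lieD_isBivector hτ hPb
  have hcomp : ∀ x i j k, schouten (lieD τ P) P x i j k = 0 := by
    intro x i j k
    have h := key_leibniz hτ hPb hPb x i j k
    have hz : (fun y => schouten P P y i j k) = fun _ => (0:ℝ) := funext fun y => hPP y i j k
    rw [hz] at h
    simp only [pd_const, mul_zero, hPP, zero_mul, Finset.sum_const_zero, add_zero, zero_add,
      sub_zero] at h
    have hsym := schouten_symm P (lieD τ P) x i j k
    linarith [h, hsym]
  have hPt2 : ∀ x i j k, schouten (lieD τ P) (lieD τ P) x i j k = 0 := by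
    intro x i j k
    have h := key_leibniz hτ hPt hPb x i j k
    have hz : (fun y => schouten (lieD τ P) P y i j k) = fun _ => (0:ℝ) :=
      funext fun y => hcomp y i j k
    rw [hz] at h
    simp only [pd_const, mul_zero, hcomp, zero_mul, Finset.sum_const_zero, add_zero, zero_add,
      sub_zero] at h
    have hcx := hc x i j k
    linarith [h, hcx]
  exact ⟨⟨hPt, hPt2⟩, hcomp, hXP, hXτ⟩
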